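/- In the game on n slices, before any of Bob's turns the remaining slices form a contiguous arc p_i p_{i+1} ... p_{i+2j-1} of even length; letting K be the slices at odd positions and L those at even positions of this arc, Bob has a strategy making only shifts (except possibly his first turn) that guarantees him all slices of K, and another guaranteeing him all slices of L; hence he can guarantee max{|K|, |L|} in addition to slices already taken. -/

import Mathlib

/-- Adjacency of slices on the circular pizza with `n` slices. -/
def adj (n : ℕ) (i j : Fin n) : Prop :=
  (i.1 + 1) % n = j.1 ∨ (j.1 + 1) % n = i.1

instance (n : ℕ) (i j : Fin n) : Decidable (adj n i j) := by
  unfold adj; infer_instance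

/-- `h` lists the slices taken so far, in the order they were taken.
It is a valid (partial) play of the Polite Pizza Protocol if no slice is taken
twice and every slice except the first is adjacent to a previously taken one. -/
def ValidHist (n : ℕ) (h : List (Fin n)) : Prop :=
  h.Nodup ∧ ∀ (k : ℕ) (hk : k < h.length), 0 < k →
    ∃ (j : ℕ) (hj : j < k), adj n (h.get ⟨k, hk⟩) (h.get ⟨j, hj.trans hk⟩)

/-- `m` is a legal next slice after history `h`. -/
def ValidMove (n : ℕ) (h : List (Fin n)) (m : Fin n) : Prop :=
  m ∉ h ∧ (h = [] ∨ ∃ x ∈ h, adj n m x)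

/-- Total size of the slices taken at (0-based) turns satisfying `f`. -/
def gainOn (n : ℕ) (P : Fin n → ℝ) (f : ℕ → Bool) (l : List (Fin n)) : ℝ :=
  ((l.zipIdx.map Prod.swap |>.filter (fun p => f p.1)).map (fun p => P p.2)).sum

/-- Alice moves at even turns (0-based), Bob at odd turns. -/
def isAlice (k : ℕ) : Bool := k % 2 == 0
def isBob (k : ℕ) : Bool := k % 2 == 1

def aliceGain (n : ℕ) (P : Fin n → ℝ) (l : List (Fin n)) : ℝ := gainOn n P isAlice l
def bobGain (n : ℕ) (P : Fin n → ℝ) (l : List (Fin n)) : ℝ := gainOn n P isBob l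

/-- The play `l` is consistent with the strategy `s` used at the turns satisfying `f`. -/
def Consistent (n : ℕ) (f : ℕ → Bool) (s : List (Fin n) → Fin n) (l : List (Fin n)) : Prop :=
  ∀ (k : ℕ) (hk : k < l.length), f k → l.get ⟨k, hk⟩ = s (l.take k)

/-- The strategy `s`, used at turns satisfying `f`, always produces legal moves. -/
def Legal (n : ℕ) (f : ℕ → Bool) (s : List (Fin n) → Fin n) : Prop :=
  ∀ h, ValidHist n h → h.length < n → f h.length → ValidMove n h (s h)

/-- Number of jumps made at turns satisfying `f` during the play `l`:
turn `k ≥ 1` is a jump if the slice taken is not adjacent to the one taken at turn `k-1`. -/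
def jumpCount (n : ℕ) (f : ℕ → Bool) (l : List (Fin n)) : ℕ :=
  ((((l.zip l.tail).zipIdx.map Prod.swap)).filter
    (fun p => f (p.1 + 1) && !(decide (adj n p.2.2 p.2.1)))).length

/-- Alice has a strategy making at most `j` jumps and guaranteeing her
slices of total size at least `g`. -/
def AliceJGain (n : ℕ) (P : Fin n → ℝ) (j : ℕ) (g : ℝ) : Prop :=
  ∃ s : List (Fin n) → Fin n, Legal n isAlice s ∧
    ∀ l : List (Fin n), ValidHist n l → l.length = n → Consistent n isAlice s l →
      g ≤ aliceGain n P l ∧ jumpCount n isAlice l ≤ j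

/-- Alice has a strategy guaranteeing her slices of total size at least `g`. -/
def AliceGain' (n : ℕ) (P : Fin n → ℝ) (g : ℝ) : Prop :=
  ∃ s : List (Fin n) → Fin n, Legal n isAlice s ∧
    ∀ l : List (Fin n), ValidHist n l → l.length = n → Consistent n isAlice s l →
      g ≤ aliceGain n P l

/-- Bob (moving second) has a strategy guaranteeing him slices of total size at least `g`. -/
def BobGain' (n : ℕ) (P : Fin n → ℝ) (g : ℝ) : Prop :=
  ∃ s : List (Fin n) → Fin n, Legal n isBob s ∧
    ∀ l : List (Fin n), ValidHist n l → l.length = n → Consistent n isBob s l →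
      g ≤ bobGain n P l

/-!
Number the free slices `i + 0, …, i + (2j - 1)`. To collect the class of offsets `≡ ε (mod 2)`,
Bob first takes the end of the arc in that class (offset `0` for `K`, `2j - 1` for `L`). From then
on the free slices form an arc of odd length whose two ends lie in the other class. Alice may only
take a slice next to a taken one, so she takes an end of this arc; Bob shifts onto the slice next
to it, which is again in his class, and the invariant is restored. Bob thus takes `j` distinct
slices of a `j`-element class, i.e. all of it, and choosing the heavier class gives the maximum.
-/

section Gain

theorem Fintype.sum_comp_eq_of_range_subset {ι α M : Type*} [Fintype ι] [AddCommMonoid M]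
    {u v : ι → α} (hu : Function.Injective u) (huv : Set.range u ⊆ Set.range v)
    (P : α → M) :
    ∑ t, P (u t) = ∑ k, P (v k) := by
  choose σ hσ using fun t => huv ⟨t, rfl⟩
  have hσ_inj : Function.Injective σ := fun t t' htt' => hu (by rw [← hσ, ← hσ, htt'])
  calc ∑ t, P (u t) = ∑ t, P (v (σ t)) := by simp only [hσ]
    _ = ∑ k, P (v k) := (Finite.injective_iff_bijective.1 hσ_inj).sum_comp (P ∘ v)

theorem Finset.sum_range_odd_ge {M : Type*} [AddCommMonoid M] (g : ℕ → M) {N : ℕ}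
    (hN : N % 2 = 1) (j : ℕ) :
    ∑ m ∈ Finset.range (N + 2 * j), (if (m % 2 == 1 && decide (N ≤ m)) then g m else 0) =
      ∑ t ∈ Finset.range j, g (N + 2 * t) := by
  induction j with
  | zero => exact Finset.sum_eq_zero fun m hm => if_neg (by simp at hm; simp; omega)
  | succ j ih =>
    rw [show N + 2 * (j + 1) = N + 2 * j + 1 + 1 by omega, Finset.sum_range_succ,
      Finset.sum_range_succ, ih, Finset.sum_range_succ, if_pos (by simp; omega),
      if_neg (by simp; omega), add_zero]

variable {n : ℕ} (P : Fin n → ℝ) (f : ℕ → Bool)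

theorem gainOn_append_singleton (l : List (Fin n)) (x : Fin n) :
    gainOn n P f (l ++ [x]) = gainOn n P f l + if f l.length then P x else 0 := by
  simp only [gainOn, List.zipIdx_append, List.map_append, List.filter_append, List.sum_append]
  split_ifs <;> simp_all

theorem gainOn_take [NeZero n] (l : List (Fin n)) {k : ℕ} (hk : k ≤ l.length) :
    gainOn n P f (l.take k) = ∑ m ∈ Finset.range k, if f m then P (l.getD m 0) else 0 := by
  induction k with
  | zero => simp [gainOn]
  | succ k ih =>
    rw [List.take_succ_eq_append_getElem (by omega), gainOn_append_singleton, ih (by omega),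
      Finset.sum_range_succ, List.length_take_of_le (by omega), List.getD_eq_getElem]

theorem gainOn_odd_ge [NeZero n] {l : List (Fin n)} {N j : ℕ} (hN : N % 2 = 1)
    (hlen : l.length = N + 2 * j) :
    gainOn n P (fun k => (k % 2 == 1) && decide (N ≤ k)) l =
      ∑ t : Fin j, P (l.getD (N + 2 * t) 0) := by
  have hall := gainOn_take P (fun k => (k % 2 == 1) && decide (N ≤ k)) l le_rfl
  rw [List.take_length] at hall
  rw [hall, hlen, Finset.sum_range_odd_ge _ hN, Finset.sum_range]

end Gain

open Fin.NatCast

section Circle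

variable {n : ℕ} [NeZero n]

theorem adj_iff_eq_add_one {x y : Fin n} : adj n x y ↔ y = x + 1 ∨ x = y + 1 := by
  have hval : ∀ z : Fin n, (z + 1).val = (z.val + 1) % n := fun z => by
    rw [Fin.val_add, Fin.val_one', Nat.add_mod_mod]
  simp only [adj, Fin.ext_iff, hval, eq_comm]

theorem adj_add_one_left (x : Fin n) : adj n (x + 1) x :=
  adj_iff_eq_add_one.2 (Or.inr rfl)

theorem adj_add_one_right (x : Fin n) : adj n x (x + 1) :=
  adj_iff_eq_add_one.2 (Or.inl rfl)

theorem eq_of_add_natCast_eq {i : Fin n} {k k' : ℕ} (hk : k < n) (hk' : k' < n)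
    (h : i + (k : Fin n) = i + k') : k = k' := by
  simpa [Fin.val_cast_of_lt hk, Fin.val_cast_of_lt hk'] using congrArg Fin.val (add_left_cancel h)

theorem add_natCast_succ (i : Fin n) (k : ℕ) :
    i + ((k + 1 : ℕ) : Fin n) = i + (k : Fin n) + 1 := by
  rw [Nat.cast_succ, add_assoc]

theorem natCast_pred_eq_neg_one : ((n - 1 : ℕ) : Fin n) = -1 := by
  rw [eq_neg_iff_add_eq_zero, ← Nat.cast_add_one, Nat.sub_add_cancel NeZero.one_le,
    Fin.natCast_self]

end Circle

section Moves

variable {n : ℕ}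

theorem ValidHist.validMove_getElem {l : List (Fin n)} (hl : ValidHist n l) {p : ℕ}
    (hp : 0 < p) (hpl : p < l.length) : ValidMove n (l.take p) l[p] := by
  refine ⟨fun hmem => ?_, Or.inr ?_⟩
  · obtain ⟨q, hq, hlq⟩ := List.mem_take_iff_getElem.1 hmem
    have := (hl.1.getElem_inj_iff (hi := by omega)).1 hlq
    omega
  · obtain ⟨q, hqp, hadj⟩ := hl.2 p hpl hp
    exact ⟨l[q], List.mem_take_iff_getElem.2 ⟨q, by omega, rfl⟩, hadj⟩

variable [NeZero n]

theorem exists_validMove (h : List (Fin n)) (hlen : h.length < n) : ∃ m, ValidMove n h m := by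
  classical
  obtain ⟨m, hm⟩ : ∃ m, m ∉ h := by
    by_contra! hall
    have := (Finset.card_le_card fun m (_ : m ∈ Finset.univ) =>
      List.mem_toFinset.2 (hall m)).trans h.toFinset_card_le
    simp at this
    omega
  rcases eq_or_ne h [] with rfl | hne
  · exact ⟨m, hm, Or.inl rfl⟩
  by_contra! hnone
  -- otherwise the taken slices are closed under `· + 1`, hence are all slices
  have hsucc : ∀ y ∈ h, y + 1 ∈ h := fun y hy => by
    by_contra hy'
    exact hnone (y + 1) ⟨hy', Or.inr ⟨y, hy, adj_add_one_left y⟩⟩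
  obtain ⟨x, hx⟩ := List.exists_mem_of_ne_nil h hne
  have hxk : ∀ k : ℕ, x + (k : Fin n) ∈ h := fun k => by
    induction k with
    | zero => simpa using hx
    | succ k ih => rw [add_natCast_succ]; exact hsucc _ ih
  apply hm
  simpa using hxk (m - x).val

open Classical in
noncomputable def legalize (c : List (Fin n) → Fin n) (h : List (Fin n)) : Fin n :=
  if ValidMove n h (c h) then c h else Classical.epsilon (ValidMove n h)

theorem legalize_validMove (c : List (Fin n) → Fin n) {h : List (Fin n)} (hlen : h.length < n) :
    ValidMove n h (legalize c h) := by
  unfold legalize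
  split_ifs with hc
  · exact hc
  · exact Classical.epsilon_spec (exists_validMove h hlen)

theorem legalize_of_validMove {c : List (Fin n) → Fin n} {h : List (Fin n)}
    (hc : ValidMove n h (c h)) : legalize c h = c h :=
  if_pos hc

end Moves

section Arc

variable {n : ℕ} [NeZero n]

def LeavesArc (i : Fin n) (a b : ℕ) (h : List (Fin n)) : Prop :=
  ∀ m, m ∉ h ↔ ∃ k, a ≤ k ∧ k < b ∧ m = i + (k : Fin n)

namespace LeavesArc

variable {i : Fin n} {a b : ℕ} {h : List (Fin n)}

theorem notMem (H : LeavesArc i a b h) {k : ℕ} (hak : a ≤ k) (hkb : k < b) :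
    i + (k : Fin n) ∉ h :=
  (H _).2 ⟨k, hak, hkb, rfl⟩

theorem mem_of_le (H : LeavesArc i a b h) {k : ℕ} (hbk : b ≤ k) (hkn : k < n) :
    i + (k : Fin n) ∈ h := by
  by_contra hk
  obtain ⟨k', -, hk'b, hkk'⟩ := (H _).1 hk
  have := eq_of_add_natCast_eq hkn (by omega) hkk'
  omega

theorem eq_or_eq_of_validMove (H : LeavesArc i a b h) (hne : h ≠ []) {m : Fin n}
    (hm : ValidMove n h m) : m = i + (a : Fin n) ∨ m = i + ((b - 1 : ℕ) : Fin n) := by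
  obtain ⟨k, hak, hkb, rfl⟩ := (H _).1 hm.1
  obtain ⟨x, hx, hadj⟩ := hm.2.resolve_left hne
  by_contra! hend
  have hka : a < k := lt_of_le_of_ne hak fun hak => hend.1 (by rw [hak])
  have hkb : k + 1 < b := by
    by_contra! hkb
    exact hend.2 (by rw [show k = b - 1 by omega])
  rcases adj_iff_eq_add_one.1 hadj with rfl | hx'
  · exact H.notMem (k := k + 1) (by omega) hkb (by rwa [add_natCast_succ])
  · have hxk : i + ((k - 1 : ℕ) : Fin n) = x :=
      add_right_cancel (by rw [← add_natCast_succ, Nat.sub_add_cancel (by omega), hx'])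
    exact H.notMem (k := k - 1) (by omega) (by omega) (hxk ▸ hx)

theorem append {a' b' c : ℕ} (H : LeavesArc i a b h) (hbn : b ≤ n) (hcb : c < b)
    (hab' : ∀ k, a' ≤ k ∧ k < b' ↔ a ≤ k ∧ k < b ∧ k ≠ c) :
    LeavesArc i a' b' (h ++ [i + (c : Fin n)]) := by
  intro m
  simp only [List.mem_append, List.mem_singleton, not_or, H m]
  constructor
  · rintro ⟨⟨k, hak, hkb, rfl⟩, hkc⟩
    exact ⟨k, ((hab' k).2 ⟨hak, hkb, fun h => hkc (by rw [h])⟩).1,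
      ((hab' k).2 ⟨hak, hkb, fun h => hkc (by rw [h])⟩).2, rfl⟩
  · rintro ⟨k, hak', hkb', rfl⟩
    obtain ⟨hak, hkb, hkc⟩ := (hab' k).1 ⟨hak', hkb'⟩
    exact ⟨⟨k, hak, hkb, rfl⟩, fun h => hkc (eq_of_add_natCast_eq (by omega) (by omega) h)⟩

theorem validMove_start (H : LeavesArc i 0 b h) (hb : 0 < b) (hbn : b < n) :
    ValidMove n h i := by
  refine ⟨by simpa using H.notMem le_rfl hb, Or.inr ⟨i - 1, ?_, ?_⟩⟩
  · simpa [natCast_pred_eq_neg_one, sub_eq_add_neg] using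
      H.mem_of_le (k := n - 1) (by omega) (by omega)
  · convert adj_add_one_left (i - 1) using 1
    abel

theorem validMove_end (H : LeavesArc i a b h) (hab : a < b) (hbn : b < n) :
    ValidMove n h (i + ((b - 1 : ℕ) : Fin n)) := by
  refine ⟨H.notMem (by omega) (by omega),
    Or.inr ⟨i + (b : Fin n), H.mem_of_le le_rfl hbn, ?_⟩⟩
  have := adj_add_one_right (i + ((b - 1 : ℕ) : Fin n))
  rwa [← add_natCast_succ, Nat.sub_add_cancel (by omega)] at this

end LeavesArc

end Arc

section Shift

variable {n : ℕ} [NeZero n]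

def shiftFrom (h : List (Fin n)) (x : Fin n) : Fin n :=
  if x + 1 ∈ h then x - 1 else x + 1

theorem adj_shiftFrom (h : List (Fin n)) (x : Fin n) : adj n (shiftFrom h x) x := by
  unfold shiftFrom
  split_ifs
  · convert adj_add_one_right (x - 1) using 1
    abel
  · exact adj_add_one_left x

def shiftMove (N : ℕ) (first : Fin n) (h : List (Fin n)) : Fin n :=
  if h.length = N then first else shiftFrom h (h.getLastD first)

variable {N : ℕ} {first i : Fin n} {l : List (Fin n)} {a b p : ℕ}

theorem legalize_shiftMove_take (hpl : p < l.length) (hN : p + 1 ≠ N)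
    (hfree : shiftFrom (l.take (p + 1)) l[p] ∉ l.take (p + 1)) :
    legalize (shiftMove N first) (l.take (p + 1)) = shiftFrom (l.take (p + 1)) l[p] := by
  have hlast : (l.take (p + 1)).getLastD first = l[p] := by
    rw [List.take_succ_eq_append_getElem hpl, List.getLastD_concat]
  have hmove : shiftMove N first (l.take (p + 1)) = shiftFrom (l.take (p + 1)) l[p] := by
    rw [shiftMove, if_neg (by simpa [List.length_take] using by omega), hlast]
  rw [legalize_of_validMove] <;> rw [hmove]
  refine ⟨hfree, Or.inr ⟨l[p], ?_, adj_shiftFrom _ _⟩⟩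
  rw [List.take_succ_eq_append_getElem hpl]
  exact List.mem_append_right _ (List.mem_singleton_self _)

/-- Alice must take an end of the arc, and Bob shifts onto the slice next to it. -/
theorem shiftMove_reply (hl : ValidHist n l) (hp : 0 < p) (hpl : p + 1 < l.length)
    (hN : p + 1 ≠ N)
    (hcons : l[p + 1] = legalize (shiftMove N first) (l.take (p + 1)))
    (H : LeavesArc i a b (l.take p)) (hab : a + 2 < b) (hbn : b < n) :
    adj n l[p + 1] l[p] ∧
      (l[p + 1] = i + ((a + 1 : ℕ) : Fin n) ∧ LeavesArc i (a + 2) b (l.take (p + 2)) ∨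
        l[p + 1] = i + ((b - 2 : ℕ) : Fin n) ∧ LeavesArc i a (b - 2) (l.take (p + 2))) := by
  have htake := List.take_succ_eq_append_getElem (show p < l.length by omega)
  have htake' := List.take_succ_eq_append_getElem hpl
  have hne : l.take p ≠ [] := List.ne_nil_of_length_pos (by simp; omega)
  rcases H.eq_or_eq_of_validMove hne (hl.validMove_getElem hp (by omega)) with hA | hA
  · have H1 : LeavesArc i (a + 1) b (l.take (p + 1)) := by
      rw [htake, hA]; exact H.append hbn.le (by omega) (by omega)
    have hshift : shiftFrom (l.take (p + 1)) l[p] = i + ((a + 1 : ℕ) : Fin n) := by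
      rw [shiftFrom, hA, ← add_natCast_succ, if_neg (H1.notMem le_rfl (by omega))]
    have hbob : l[p + 1] = shiftFrom (l.take (p + 1)) l[p] := by
      rw [hcons, legalize_shiftMove_take (by omega) hN
        (by rw [hshift]; exact H1.notMem le_rfl (by omega))]
    refine ⟨hbob ▸ adj_shiftFrom _ _, Or.inl ⟨hbob.trans hshift, ?_⟩⟩
    rw [htake', hbob, hshift]; exact H1.append hbn.le (by omega) (by omega)
  · have H1 : LeavesArc i a (b - 1) (l.take (p + 1)) := by
      rw [htake, hA]; exact H.append hbn.le (by omega) (by omega)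
    have hshift : shiftFrom (l.take (p + 1)) l[p] = i + ((b - 2 : ℕ) : Fin n) := by
      have hb : i + ((b - 1 : ℕ) : Fin n) = i + ((b - 2 : ℕ) : Fin n) + 1 := by
        rw [← add_natCast_succ]; congr 3; omega
      rw [shiftFrom, hA, ← add_natCast_succ, Nat.sub_add_cancel (by omega),
        if_pos (H1.mem_of_le (by omega) hbn), hb, add_sub_cancel_right]
    have hbob : l[p + 1] = shiftFrom (l.take (p + 1)) l[p] := by
      rw [hcons, legalize_shiftMove_take (by omega) hN
        (by rw [hshift]; exact H1.notMem (by omega) (by omega))]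
    refine ⟨hbob ▸ adj_shiftFrom _ _, Or.inr ⟨hbob.trans hshift, ?_⟩⟩
    rw [htake', hbob, hshift]; exact H1.append (by omega) (by omega) (by omega)

end Shift

section Play

variable {n : ℕ} [NeZero n] {N j ε f : ℕ} {i : Fin n} {l : List (Fin n)}

theorem getElem_eq_shiftMove_first (hlen : l.length = N + 2 * j) (hj : 0 < j) (hjn : 2 * j < n)
    (H0 : LeavesArc i 0 (2 * j) (l.take N)) (hf : ε = 0 ∧ f = 0 ∨ ε = 1 ∧ f = 2 * j - 1)
    (hcons : l[N]'(by omega) = legalize (shiftMove N (i + (f : Fin n))) (l.take N)) :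
    l[N]'(by omega) = i + (f : Fin n) := by
  have hN : (l.take N).length = N := List.length_take_of_le (by omega)
  rw [hcons, legalize_of_validMove] <;> rw [shiftMove, if_pos hN]
  rcases hf with ⟨-, rfl⟩ | ⟨-, rfl⟩
  · simpa using H0.validMove_start (by omega) hjn
  · exact H0.validMove_end (by omega) hjn

theorem shiftMove_invariant (hl : ValidHist n l) (hlen : l.length = N + 2 * j) (hjn : 2 * j < n)
    (H0 : LeavesArc i 0 (2 * j) (l.take N)) (hf : ε = 0 ∧ f = 0 ∨ ε = 1 ∧ f = 2 * j - 1)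
    (hcons : ∀ k (hk : k < l.length), N ≤ k → (k - N) % 2 = 0 →
      l[k] = legalize (shiftMove N (i + (f : Fin n))) (l.take k))
    {t r : ℕ} (htr : t + r + 1 = j) :
    (∃ κ < j, l[N + 2 * t]'(by omega) = i + ((2 * κ + ε : ℕ) : Fin n)) ∧
      (0 < t → adj n (l[N + 2 * t]'(by omega)) (l[N + 2 * t - 1]'(by omega))) ∧
      ∃ a, a % 2 ≠ ε ∧ a + 2 * r + 1 ≤ 2 * j ∧
        LeavesArc i a (a + 2 * r + 1) (l.take (N + 1 + 2 * t)) := by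
  induction t generalizing r with
  | zero =>
    have hfirst :=
      getElem_eq_shiftMove_first hlen (by omega) hjn H0 hf (hcons N _ le_rfl (by simp))
    simp only [mul_zero, add_zero, lt_irrefl, false_imp_iff, true_and]
    refine ⟨⟨(j - 1) * ε, ?_, ?_⟩, 1 - ε, ?_⟩
    · rcases hf with ⟨rfl, -⟩ | ⟨rfl, -⟩ <;> omega
    · rw [hfirst]
      congr 2
      rcases hf with ⟨rfl, rfl⟩ | ⟨rfl, rfl⟩ <;> omega
    · refine ⟨by omega, by omega, ?_⟩
      rw [List.take_succ_eq_append_getElem (by omega), hfirst]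
      exact H0.append hjn.le (by omega) (by omega)
  | succ t ih =>
    obtain ⟨-, -, a, ha, hab, H⟩ := ih (r := r + 1) (by omega)
    obtain ⟨hadj, hbob⟩ := shiftMove_reply hl (p := N + 1 + 2 * t) (by omega) (by omega)
      (by omega) (hcons _ _ (by omega) (by omega)) H (by omega) (by omega)
    simp only [show N + 2 * (t + 1) = N + 1 + 2 * t + 1 by omega,
      show N + 1 + 2 * t + 1 - 1 = N + 1 + 2 * t by omega,
      show N + 1 + 2 * (t + 1) = N + 1 + 2 * t + 2 by omega]
    refine ⟨?_, fun _ => hadj, ?_⟩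
    · rcases hbob with ⟨hbob, -⟩ | ⟨hbob, -⟩
      · exact ⟨(a + 1 - ε) / 2, by omega, by rw [hbob]; congr 2; omega⟩
      · exact ⟨(a + 2 * r + 1 - ε) / 2, by omega, by rw [hbob]; congr 2; omega⟩
    · rcases hbob with ⟨-, H'⟩ | ⟨-, H'⟩
      · exact ⟨a + 2, by omega, by omega, by convert H' using 2; omega⟩
      · exact ⟨a, ha, by omega, by convert H' using 2; omega⟩

end Play

theorem exists_shift_strategy {n : ℕ} [NeZero n] (P : Fin n → ℝ) (h : List (Fin n))
    (hodd : h.length % 2 = 1) (j : ℕ) (hlen : h.length + 2 * j = n) (i : Fin n)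
    (hrem : ∀ m : Fin n, m ∉ h ↔ ∃ k < 2 * j, m = i + ((k : ℕ) : Fin n))
    {ε f : ℕ} (hf : ε = 0 ∧ f = 0 ∨ ε = 1 ∧ f = 2 * j - 1) :
    ∃ s : List (Fin n) → Fin n,
      (∀ h', h'.length < n → ValidMove n h' (s h')) ∧
      ∀ l : List (Fin n), ValidHist n l → l.length = n → h <+: l →
        (∀ (k : ℕ) (hk : k < l.length), k % 2 = 1 → h.length ≤ k →
          l.get ⟨k, hk⟩ = s (l.take k)) →
        (∀ (t : ℕ) (ht : t < l.length) (ht' : t - 1 < l.length),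
          h.length < t → t % 2 = 1 → adj n (l.get ⟨t, ht⟩) (l.get ⟨t - 1, ht'⟩)) ∧
        gainOn n P (fun k => (k % 2 == 1) && (h.length ≤ k : Bool)) l =
          ∑ k ∈ Finset.range j, P (i + ((2 * k + ε : ℕ) : Fin n)) := by
  refine ⟨legalize (shiftMove h.length (i + (f : Fin n))), fun _ => legalize_validMove _,
    fun l hl hn hpre hcons => ?_⟩
  have hlen' : l.length = h.length + 2 * j := by omega
  have H0 : LeavesArc i 0 (2 * j) (l.take h.length) := by
    rw [← List.prefix_iff_eq_take.1 hpre]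
    simpa [LeavesArc] using hrem
  have hinv := fun t (ht : t < j) => shiftMove_invariant hl hlen' (by omega) H0 hf
    (fun k hk hNk hk2 => hcons k hk (by omega) hNk) (t := t) (r := j - 1 - t) (by omega)
  refine ⟨fun t _ _ hNt ht2 => ?_, ?_⟩
  · obtain ⟨s, rfl⟩ : ∃ s, t = h.length + 2 * s := ⟨(t - h.length) / 2, by omega⟩
    exact (hinv s (by omega)).2.1 (by omega)
  · have hbob : ∀ t : Fin j, l.getD (h.length + 2 * t) 0 = l[h.length + 2 * t]'(by omega) :=
      fun t => List.getD_eq_getElem _ _ _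
    rw [gainOn_odd_ge P hodd hlen', Finset.sum_range]
    refine Fintype.sum_comp_eq_of_range_subset (fun t t' htt' => ?_) ?_ P
    · simp only [hbob, hl.1.getElem_inj_iff] at htt'
      exact Fin.ext (by omega)
    · rintro _ ⟨t, rfl⟩
      obtain ⟨κ, hκ, hκt⟩ := (hinv t t.2).1
      exact ⟨⟨κ, hκ⟩, by simp only [hbob, hκt]⟩

open Fin.NatCast in
theorem bob_gets_max_alternating_class_general (n : ℕ) [NeZero n]
    (P : Fin n → ℝ)
    (h : List (Fin n)) (hodd : h.length % 2 = 1)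
    (j : ℕ) (hlen : h.length + 2 * j = n)
    (i : Fin n)
    (hrem : ∀ m : Fin n, m ∉ h ↔ ∃ k < 2 * j, m = i + ((k : ℕ) : Fin n)) :
    ∃ s : List (Fin n) → Fin n,
      (∀ h', ValidHist n h' → h'.length < n → h'.length % 2 = 1 → h <+: h' →
        ValidMove n h' (s h')) ∧
      ∀ l : List (Fin n), ValidHist n l → l.length = n → h <+: l →
        (∀ (k : ℕ) (hk : k < l.length), k % 2 = 1 → h.length ≤ k →
          l.get ⟨k, hk⟩ = s (l.take k)) →
        (∀ (t : ℕ) (ht : t < l.length) (ht' : t - 1 < l.length),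
          h.length < t → t % 2 = 1 → adj n (l.get ⟨t, ht⟩) (l.get ⟨t - 1, ht'⟩)) ∧
        max (∑ k ∈ Finset.range j, P (i + (((2 * k : ℕ)) : Fin n)))
            (∑ k ∈ Finset.range j, P (i + (((2 * k + 1 : ℕ)) : Fin n)))
          ≤ gainOn n P (fun k => (k % 2 == 1) && (h.length ≤ k : Bool)) l := by
  obtain ⟨sK, hsK, hK⟩ :=
    exists_shift_strategy P h hodd j hlen i hrem (ε := 0) (f := 0) (by omega)
  obtain ⟨sL, hsL, hL⟩ :=
    exists_shift_strategy P h hodd j hlen i hrem (ε := 1) (f := 2 * j - 1) (by omega)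
  simp only [add_zero] at hK
  rcases le_total (∑ k ∈ Finset.range j, P (i + (((2 * k : ℕ)) : Fin n)))
      (∑ k ∈ Finset.range j, P (i + (((2 * k + 1 : ℕ)) : Fin n))) with hKL | hLK
  · refine ⟨sL, fun h' _ hlt _ _ => hsL h' hlt, fun l hl hn hpre hcons => ?_⟩
    obtain ⟨hshift, hgain⟩ := hL l hl hn hpre hcons
    exact ⟨hshift, by rw [max_eq_right hKL, hgain]⟩
  · refine ⟨sK, fun h' _ hlt _ _ => hsK h' hlt, fun l hl hn hpre hcons => ?_⟩
    obtain ⟨hshift, hgain⟩ := hK l hl hn hpre hcons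
    exact ⟨hshift, by rw [max_eq_left hLK, hgain]⟩

open Fin.NatCast in
/-- before any of Bob\'s turns the remaining slices form an arc
`p_i … p_{i+2j-1}` of even length; Bob has a continuation strategy, making only
shifts except possibly for his first turn, which guarantees him in addition
the larger of the two alternating classes `K` (even offsets) and `L` (odd offsets). -/
theorem bob_gets_max_alternating_class (n : ℕ) [NeZero n]
    (P : Fin n → ℝ) (hP : ∀ i, 0 ≤ P i)
    (h : List (Fin n)) (hh : ValidHist n h) (hodd : h.length % 2 = 1)
    (j : ℕ) (hj : 1 ≤ j) (hlen : h.length + 2 * j = n)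
    (i : Fin n)
    (hrem : ∀ m : Fin n, m ∉ h ↔ ∃ k < 2 * j, m = i + ((k : ℕ) : Fin n)) :
    ∃ s : List (Fin n) → Fin n,
      (∀ h', ValidHist n h' → h'.length < n → h'.length % 2 = 1 → h <+: h' →
        ValidMove n h' (s h')) ∧
      ∀ l : List (Fin n), ValidHist n l → l.length = n → h <+: l →
        (∀ (k : ℕ) (hk : k < l.length), k % 2 = 1 → h.length ≤ k →
          l.get ⟨k, hk⟩ = s (l.take k)) →
        (∀ (t : ℕ) (ht : t < l.length) (ht' : t - 1 < l.length),
          h.length < t → t % 2 = 1 → adj n (l.get ⟨t, ht⟩) (l.get ⟨t - 1, ht'⟩)) ∧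
        max (∑ k ∈ Finset.range j, P (i + (((2 * k : ℕ)) : Fin n)))
            (∑ k ∈ Finset.range j, P (i + (((2 * k + 1 : ℕ)) : Fin n)))
          ≤ gainOn n P (fun k => (k % 2 == 1) && (h.length ≤ k : Bool)) l :=
  bob_gets_max_alternating_class_general n P h hodd j hlen i hrem
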